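/- Directed graph isomorphism reduces to V-standard TRS isomorphism via the encoding R'(G): two finite unlabelled directed graphs G₁ and G₂ without isolated vertices are isomorphic if and only if the TRSs R'(G₁) and R'(G₂) are V-globally isomorphic, where R'(G) = ({f,c}, {x_v : v ∈ V}, {f(x_v, x_w) → c : (v,w) ∈ E}) with f binary and c a constant. -/
import Mathlib


set_option autoImplicit false

universe u
variable {F V F' V' F'' V'' : Type}

inductive Term (F V : Type) : Type where
  | var : V → Term F V
  | app : F → List (Term F V) → Term F V

namespace Term

def map (φF : F → F') (φV : V → V') : Term F V → Term F' V'
  | var x => var (φV x)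
  | app f ts => app (φF f) (ts.attach.map fun t => map φF φV t.1)

decreasing_by
  have := List.sizeOf_lt_of_mem t.2
  simp_wf
  omega

def subst (σ : V → Term F V) : Term F V → Term F V
  | var x => σ x
  | app f ts => app f (ts.attach.map fun t => subst σ t.1)

decreasing_by
  have := List.sizeOf_lt_of_mem t.2
  simp_wf
  omega

def vars : Term F V → Set V
  | var x => {x}
  | app _ ts => {v | ∃ t ∈ ts.attach, v ∈ vars t.1}

decreasing_by
  have := List.sizeOf_lt_of_mem t.2
  simp_wf
  omega

end Term

inductive Ctx (F V : Type) : Type where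
  | hole : Ctx F V
  | app : F → List (Term F V) → Ctx F V → List (Term F V) → Ctx F V

def Ctx.fill : Ctx F V → Term F V → Term F V
  | .hole, t => t
  | .app f pre C post, t => .app f (pre ++ [C.fill t] ++ post)

def Ctx.map (φF : F → F') (φV : V → V') : Ctx F V → Ctx F' V'
  | .hole => .hole
  | .app f pre C post => .app (φF f) (pre.map (Term.map φF φV)) (C.map φF φV) (post.map (Term.map φF φV))

abbrev Rule (F V : Type) := Term F V × Term F V

def ruleMap (φF : F → F') (φV : V → V') (p : Rule F V) : Rule F' V' :=
  (p.1.map φF φV, p.2.map φF φV)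

def Rewrites (𝓡 : Set (Rule F V)) (s t : Term F V) : Prop :=
  ∃ (C : Ctx F V) (σ : V → Term F V) (p : Rule F V),
    p ∈ 𝓡 ∧ s = C.fill (p.1.subst σ) ∧ t = C.fill (p.2.subst σ)

def IsTermIso (ar : F → ℕ) (ar' : F' → ℕ) (φF : F → F') (φV : V → V') : Prop :=
  Function.Bijective φF ∧ Function.Bijective φV ∧ ∀ f, ar' (φF f) = ar f

def IsTRS (ar : F → ℕ) (𝓡 : Set (Rule F V)) : Prop :=
  𝓡.Finite ∧ ∀ p ∈ 𝓡, (∀ x, p.1 ≠ Term.var x) ∧ p.2.vars ⊆ p.1.vars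

/-- Global isomorphism between rule sets. -/
def GlobalIsoP {F V F' V' : Type} (ar : F → ℕ) (ar' : F' → ℕ)
    (𝓡 : Set (Rule F V)) (𝓡' : Set (Rule F' V')) : Prop :=
  ∃ (φF : F → F') (φV : V → V'),
    IsTermIso ar ar' φF φV ∧ ruleMap φF φV '' 𝓡 = 𝓡'

/-- F-global isomorphism: a global isomorphism that is the identity on variables. -/
def FGlobalIsoP {F V F' : Type} (ar : F → ℕ) (ar' : F' → ℕ)
    (𝓡 : Set (Rule F V)) (𝓡' : Set (Rule F' V)) : Prop :=
  ∃ φF : F → F', IsTermIso ar ar' φF (id : V → V) ∧ ruleMap φF (id : V → V) '' 𝓡 = 𝓡'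

/-- V-global isomorphism: a global isomorphism that is the identity on function symbols. -/
def VGlobalIsoP {F V V' : Type} (ar : F → ℕ)
    (𝓡 : Set (Rule F V)) (𝓡' : Set (Rule F V')) : Prop :=
  ∃ φV : V → V', IsTermIso ar ar (id : F → F) φV ∧ ruleMap (id : F → F) φV '' 𝓡 = 𝓡'

inductive F16 : Type | f | c
deriving DecidableEq

def ar16 : F16 → ℕ
  | .f => 2
  | .c => 0

/-- The encoding `R'(G)`: rules `f(x_v, x_w) → c` for each edge `(v,w)`. -/
def encodeR' {W : Type} (E : Set (W × W)) : Set (Rule F16 W) :=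
  {r | ∃ e ∈ E, r = (Term.app .f [Term.var e.1, Term.var e.2], Term.app .c [])}

lemma map_edge_rule {W W' : Type} (φ : W → W') (v w : W) :
    ruleMap (id : F16 → F16) φ
      (Term.app .f [Term.var v, Term.var w], Term.app .c []) =
      (Term.app .f [Term.var (φ v), Term.var (φ w)], Term.app .c []) := by
  simp [ruleMap, Term.map, List.attach_map_val]

theorem graphIso_iff_VGlobalIso_encodeR'
    {V₁ V₂ : Type} [Fintype V₁] [Fintype V₂]
    (E₁ : Set (V₁ × V₁)) (E₂ : Set (V₂ × V₂))
    (h₁ : ∀ v : V₁, ∃ w, (v, w) ∈ E₁ ∨ (w, v) ∈ E₁)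
    (h₂ : ∀ v : V₂, ∃ w, (v, w) ∈ E₂ ∨ (w, v) ∈ E₂) :
    (∃ φ : V₁ → V₂, Function.Bijective φ ∧
       ∀ v w, (v, w) ∈ E₁ ↔ (φ v, φ w) ∈ E₂) ↔
    VGlobalIsoP ar16 (encodeR' E₁) (encodeR' E₂) := by
  constructor
  · rintro ⟨φ, hbij, hedge⟩
    refine ⟨φ, ⟨Function.bijective_id, hbij, fun f => rfl⟩, ?_⟩
    ext r
    constructor
    · rintro ⟨r₁, ⟨e, he, rfl⟩, rfl⟩
      exact ⟨(φ e.1, φ e.2), (hedge e.1 e.2).1 he, map_edge_rule φ e.1 e.2⟩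
    · rintro ⟨⟨a, b⟩, he, rfl⟩
      obtain ⟨v, rfl⟩ := hbij.2 a
      obtain ⟨w, rfl⟩ := hbij.2 b
      exact ⟨(Term.app .f [Term.var v, Term.var w], Term.app .c []),
        ⟨(v, w), (hedge v w).2 he, rfl⟩, map_edge_rule φ v w⟩
  · rintro ⟨φ, ⟨-, hbij, -⟩, him⟩
    refine ⟨φ, hbij, fun v w => ?_⟩
    constructor
    · intro h
      have : ruleMap (id : F16 → F16) φ
          (Term.app .f [Term.var v, Term.var w], Term.app .c []) ∈ encodeR' E₂ := by
        rw [← him]; exact ⟨_, ⟨(v, w), h, rfl⟩, rfl⟩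
      obtain ⟨e, he, heq⟩ := this
      rw [map_edge_rule] at heq
      obtain ⟨h1, h2⟩ := Prod.mk.injEq .. ▸ heq
      injection h1 with _ hl
      injection hl with ha hl
      injection hl with hb _
      injection ha with ha; injection hb with hb
      rwa [ha, hb]
    · intro h
      have : (Term.app F16.f [Term.var (φ v), Term.var (φ w)],
          Term.app F16.c ([] : List (Term F16 V₂))) ∈ encodeR' E₂ :=
        ⟨(φ v, φ w), h, rfl⟩
      rw [← him] at this
      obtain ⟨r₁, ⟨⟨a, b⟩, he, rfl⟩, heq⟩ := this
      rw [map_edge_rule] at heq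
      obtain ⟨h1, h2⟩ := Prod.mk.injEq .. ▸ heq
      injection h1 with _ hl
      injection hl with ha hl
      injection hl with hb _
      injection ha with ha; injection hb with hb
      simp only [] at ha hb
      rwa [hbij.1 ha, hbij.1 hb] at he
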